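/- arXiv:1603.00329 — 13 statements merged into one kernel-verified Lean document; each statement's English description precedes it below -/
import Mathlib

section
/- For each pair of vectors a = (a_1,...,a_r) of positive integers and b = (b_1,...,b_s) of positive integers with sum a_i = sum b_i, and m = max(max_i a_i, max_i b_i), there exist sets A_1,...,A_r ⊆ {1,...,m} and B_1,...,B_s ⊆ {1,...,m} with |A_i| = a_i, |B_i| = b_i, and for every j ∈ {1,...,m}, the number of indices i with j ∈ A_i equals the number of indices i with j ∈ B_i. -/
/-!
Lay intervals of lengths `a 0, a 1, …` end to end on `ℕ` and reduce them modulo `m`. Since no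
`a i` exceeds `m`, the `i`-th interval hits `a i` distinct residues, and the degree of a residue
`j` is the number of `k < ∑ i, a i` with `k ≡ j [MOD m]`. This depends only on the sum, so the
same construction applied to `b` gives the same degrees.
-/

open Finset

lemma Set.InjOn.card_filter_apply_eq {α β : Type*} [DecidableEq β] {s : Finset α}
    {f : α → β} (hf : Set.InjOn f s) (y : β) :
    #{x ∈ s | f x = y} = if y ∈ s.image f then 1 else 0 := by
  rw [← card_image_of_injOn (hf.mono (filter_subset _ s)), ← filter_image (p := (· = y)),
    filter_eq']
  split_ifs <;> rfl

section CyclicPlacement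

open Fin.NatCast

variable {m : ℕ} [NeZero m]

lemma natCast_injOn_Ico (p : ℕ) {l : ℕ} (hl : l ≤ m) :
    Set.InjOn (Nat.cast : ℕ → Fin m) (Ico p (p + l)) := by
  intro k₁ hk₁ k₂ hk₂ h
  simp only [coe_Ico, Set.mem_Ico] at hk₁ hk₂
  exact Nat.ModEq.eq_of_abs_lt (congrArg Fin.val h) (abs_sub_lt_iff.2 ⟨by omega, by omega⟩)

lemma exists_cyclic_placement {r : ℕ} (a : Fin r → ℕ) (ha : ∀ i, a i ≤ m) (p : ℕ) :
    ∃ A : Fin r → Finset (Fin m), (∀ i, #(A i) = a i) ∧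
      ∀ j, #{i | j ∈ A i} = #{k ∈ Ico p (p + ∑ i, a i) | ((k : ℕ) : Fin m) = j} := by
  induction r generalizing p with
  | zero => exact ⟨Fin.elim0, fun i => i.elim0, fun j => by simp⟩
  | succ r ih =>
    obtain ⟨A, hA, hdeg⟩ := ih (Fin.tail a) (fun i => ha i.succ) (p + a 0)
    have hinj := natCast_injOn_Ico p (ha 0)
    refine ⟨Fin.cons ((Ico p (p + a 0)).image Nat.cast) A, fun i => ?_, fun j => ?_⟩
    · cases i using Fin.cases with
      | zero =>
        rw [Fin.cons_zero, card_image_of_injOn hinj, Nat.card_Ico, Nat.add_sub_cancel_left]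
      | succ i => exact hA i
    · rw [Fin.card_filter_univ_succ', Fin.sum_univ_succ, ← add_assoc,
        ← Ico_union_Ico_eq_Ico (Nat.le_add_right _ _) (Nat.le_add_right _ _), filter_union,
        card_union_of_disjoint (disjoint_filter_filter (Ico_disjoint_Ico_consecutive _ _ _)),
        hinj.card_filter_apply_eq]
      simp only [Fin.cons_zero, Fin.cons_succ, hdeg]
      rfl

end CyclicPlacement

theorem stmt0_general (r s : ℕ) (a : Fin r → ℕ) (b : Fin s → ℕ)
    (hsum : ∑ i, a i = ∑ i, b i)
    (m : ℕ) (hm : m = max (Finset.univ.sup a) (Finset.univ.sup b)) :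
    ∃ (A : Fin r → Finset (Fin m)) (B : Fin s → Finset (Fin m)),
      (∀ i, (A i).card = a i) ∧ (∀ i, (B i).card = b i) ∧
      ∀ j : Fin m,
        (Finset.univ.filter (fun i => j ∈ A i)).card =
        (Finset.univ.filter (fun i => j ∈ B i)).card := by
  have ha : ∀ i, a i ≤ m := fun i => hm ▸ (le_sup (mem_univ i)).trans (le_max_left _ _)
  have hb : ∀ i, b i ≤ m := fun i => hm ▸ (le_sup (mem_univ i)).trans (le_max_right _ _)
  rcases Nat.eq_zero_or_pos m with rfl | hm₀
  · exact ⟨fun _ => ∅, fun _ => ∅, fun i => (Nat.le_zero.1 (ha i)).symm,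
      fun i => (Nat.le_zero.1 (hb i)).symm, fun j => j.elim0⟩
  have : NeZero m := ⟨hm₀.ne'⟩
  obtain ⟨A, hA, hAdeg⟩ := exists_cyclic_placement a ha 0
  obtain ⟨B, hB, hBdeg⟩ := exists_cyclic_placement b hb 0
  exact ⟨A, B, hA, hB, fun j => by rw [hAdeg, hBdeg, hsum]⟩

/-- Lemma (LVTOC): vectors of positive integers with equal sums can be realized
as set systems over `{1,…,m}` with equal degrees, where `m` is the maximal entry. -/
theorem stmt0 (r s : ℕ) (a : Fin r → ℕ) (b : Fin s → ℕ)
    (ha : ∀ i, 0 < a i) (hb : ∀ i, 0 < b i)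
    (hsum : ∑ i, a i = ∑ i, b i)
    (m : ℕ) (hm : m = max (Finset.univ.sup a) (Finset.univ.sup b)) :
    ∃ (A : Fin r → Finset (Fin m)) (B : Fin s → Finset (Fin m)),
      (∀ i, (A i).card = a i) ∧ (∀ i, (B i).card = b i) ∧
      ∀ j : Fin m,
        (Finset.univ.filter (fun i => j ∈ A i)).card =
        (Finset.univ.filter (fun i => j ∈ B i)).card :=
  stmt0_general r s a b hsum m hm
end

section
/- Every weighted threshold function is regular: if f admits weights w_1 ≥ ... ≥ w_n (after reordering) realizing it as a weighted threshold function, then for every pair of variables i, j either i dominates j or j dominates i in f. -/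
/-!
If `w` separates the true vectors of `f` from the false ones and `w j ≤ w i`, then moving a `1`
from position `j` to position `i` cannot decrease the weight of a vector, so it cannot turn a true
vector into a false one: `i` dominates `j`. Since any two weights are comparable, dominance is
complete.
-/

def Dominates {n : ℕ} (f : (Fin n → Bool) → Bool) (i j : Fin n) : Prop :=
  ∀ x : Fin n → Bool, f x = true → x i = false → x j = true →
    f (Function.update (Function.update x i true) j false) = true

section WeightedSum

variable {ι : Type*} [Fintype ι]

def weightedSum (w : ι → ℕ) (x : ι → Bool) : ℕ :=
  ∑ i, w i * (x i).toNat

def IsThresholdWeighting (f : (ι → Bool) → Bool) (w : ι → ℕ) : Prop :=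
  ∀ x y, f x = true → f y = false → weightedSum w y < weightedSum w x

theorem weightedSum_update_add [DecidableEq ι] (w : ι → ℕ) (x : ι → Bool) (i : ι) (b : Bool) :
    weightedSum w (Function.update x i b) + w i * (x i).toNat =
      weightedSum w x + w i * b.toNat := by
  have hrest : ∑ k ∈ {i}ᶜ, w k * (Function.update x i b k).toNat =
      ∑ k ∈ {i}ᶜ, w k * (x k).toNat :=
    Finset.sum_congr rfl fun k hk ↦ by
      rw [Function.update_of_ne (by simpa using hk)]
  simp only [weightedSum, Fintype.sum_eq_add_sum_compl i, hrest, Function.update_self]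
  ring

theorem weightedSum_le_of_move [DecidableEq ι] {w : ι → ℕ} {x : ι → Bool} {i j : ι}
    (hij : w j ≤ w i) (hxi : x i = false) (hxj : x j = true) :
    weightedSum w x ≤
      weightedSum w (Function.update (Function.update x i true) j false) := by
  have hne : j ≠ i := by rintro rfl; simp_all
  have hset := weightedSum_update_add w x i true
  have hclear := weightedSum_update_add w (Function.update x i true) j false
  rw [Function.update_of_ne hne, hxj] at hclear
  rw [hxi] at hset
  simp only [Bool.toNat_true, Bool.toNat_false, mul_one, mul_zero, add_zero] at hset hclear
  omega

end WeightedSum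

theorem IsThresholdWeighting.dominates {n : ℕ} {f : (Fin n → Bool) → Bool} {w : Fin n → ℕ}
    (hw : IsThresholdWeighting f w) {i j : Fin n} (hij : w j ≤ w i) : Dominates f i j := by
  intro x hx hxi hxj
  by_contra hy
  exact (hw x _ hx (Bool.eq_false_iff.mpr hy)).not_ge (weightedSum_le_of_move hij hxi hxj)

/-- Every weighted threshold function is regular: the dominance relation is complete. -/
theorem stmt4 (n : ℕ) (f : (Fin n → Bool) → Bool)
    (hweighted : ∃ w : Fin n → ℕ, ∀ x y : Fin n → Bool, f x = true → f y = false →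
      ∑ i, w i * (y i).toNat < ∑ i, w i * (x i).toNat) :
    ∀ i j : Fin n, Dominates f i j ∨ Dominates f j i := by
  obtain ⟨w, hw⟩ := hweighted
  have hw : IsThresholdWeighting f w := hw
  intro i j
  exact (le_total (w j) (w i)).imp hw.dominates hw.dominates
end

section
/- Let G be a simple game and G' the game arising from G by removing its null players. Then for every m, G is m-trade robust if and only if G' is m-trade robust. -/
/-!
A null player never changes whether a coalition wins, so a coalition wins iff its trace on
the non-null players `N'` does. Intersecting every coalition of a trading transform with `N'`
keeps it a trading transform and keeps winners winning and losers losing, so a violation of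
trade robustness in `G` yields one in `G'`; the converse holds since coalitions of `G'` are
coalitions of `G`.
-/

/-- `⟨X; Y⟩` is a trading transform: every player belongs to as many `X`s as `Y`s. -/
def TradingTransform {n j : ℕ} (X Y : Fin j → Finset (Fin n)) : Prop :=
  ∀ a : Fin n,
    (Finset.univ.filter (fun i => a ∈ X i)).card =
      (Finset.univ.filter (fun i => a ∈ Y i)).card

/-- The game with winning predicate `W` on the coalitions contained in `D` is
`m`-trade robust. -/
def TradeRobustOn {n : ℕ} (D : Finset (Fin n)) (W : Finset (Fin n) → Prop)
    (m : ℕ) : Prop :=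
  ¬ ∃ (j : ℕ) (_ : 0 < j) (_ : j ≤ m) (X Y : Fin j → Finset (Fin n)),
      (∀ i, X i ⊆ D) ∧ (∀ i, Y i ⊆ D) ∧ TradingTransform X Y ∧
      (∀ i, W (X i)) ∧ (∀ i, ¬ W (Y i))

section NullPlayers

variable {α : Type*} [DecidableEq α] (W : Finset α → Prop)

theorem iff_erase_of_null {i : α} (hi : ∀ S, W (insert i S) ↔ W (S.erase i))
    (S : Finset α) : W S ↔ W (S.erase i) := by
  by_cases hiS : i ∈ S
  · calc W S ↔ W (insert i (S.erase i)) := by rw [Finset.insert_erase hiS]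
      _ ↔ W ((S.erase i).erase i) := hi _
      _ ↔ W (S.erase i) := by rw [Finset.erase_idem]
  · rw [Finset.erase_eq_of_notMem hiS]

theorem iff_inter_of_null {D : Finset α}
    (hnull : ∀ i ∉ D, ∀ S, W (insert i S) ↔ W (S.erase i)) (S : Finset α) :
    W S ↔ W (S ∩ D) := by
  induction S using Finset.strongInduction with
  | _ S ih =>
    by_cases hSD : S ⊆ D
    · rw [Finset.inter_eq_left.mpr hSD]
    · obtain ⟨i, hiS, hiD⟩ := Finset.not_subset.mp hSD
      have h_trace : S.erase i ∩ D = S ∩ D := by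
        rw [Finset.erase_inter, Finset.erase_eq_of_notMem (by simp [hiD])]
      rw [iff_erase_of_null W (hnull i hiD) S, ih _ (Finset.erase_ssubset hiS), h_trace]

end NullPlayers

theorem TradingTransform.inter {n j : ℕ} {X Y : Fin j → Finset (Fin n)}
    (h : TradingTransform X Y) (D : Finset (Fin n)) :
    TradingTransform (fun i => X i ∩ D) (fun i => Y i ∩ D) := by
  intro a
  by_cases ha : a ∈ D
  · simpa only [Finset.mem_inter, ha, and_true] using h a
  · simp [ha]

namespace TradeRobustOn

variable {n : ℕ} {D D' : Finset (Fin n)} {W : Finset (Fin n) → Prop} {m : ℕ}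

theorem mono (hD : D ⊆ D') (h : TradeRobustOn D' W m) : TradeRobustOn D W m := by
  rintro ⟨j, hj, hjm, X, Y, hX, hY, ht, hWX, hWY⟩
  exact h ⟨j, hj, hjm, X, Y, fun i => (hX i).trans hD, fun i => (hY i).trans hD, ht, hWX, hWY⟩

theorem of_iff_inter (hW : ∀ S, W S ↔ W (S ∩ D)) (h : TradeRobustOn D W m) :
    TradeRobustOn D' W m := by
  rintro ⟨j, hj, hjm, X, Y, -, -, ht, hWX, hWY⟩
  exact h ⟨j, hj, hjm, fun i => X i ∩ D, fun i => Y i ∩ D,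
    fun _ => Finset.inter_subset_right, fun _ => Finset.inter_subset_right, ht.inter D,
    fun i => (hW _).mp (hWX i), fun i => (hW _).not.mp (hWY i)⟩

end TradeRobustOn

theorem stmt6_general (n : ℕ) (W : Finset (Fin n) → Prop)
    (N' : Finset (Fin n))
    (hN' : ∀ i : Fin n, i ∈ N' ↔ ¬ (∀ S, W (insert i S) ↔ W (S.erase i)))
    (m : ℕ) :
    TradeRobustOn Finset.univ W m ↔ TradeRobustOn N' W m := by
  have hnull : ∀ i ∉ N', ∀ S, W (insert i S) ↔ W (S.erase i) := fun i hi => by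
    simpa [hN'] using hi
  exact ⟨TradeRobustOn.mono (Finset.subset_univ _),
    TradeRobustOn.of_iff_inter (iff_inter_of_null W hnull)⟩

/-- Removing null players does not affect `m`-trade robustness. -/
theorem stmt6 (n : ℕ) (W : Finset (Fin n) → Prop)
    (hmono : ∀ S T, S ⊆ T → W S → W T)
    (N' : Finset (Fin n))
    (hN' : ∀ i : Fin n, i ∈ N' ↔ ¬ (∀ S, W (insert i S) ↔ W (S.erase i)))
    (m : ℕ) :
    TradeRobustOn Finset.univ W m ↔ TradeRobustOn N' W m :=
  stmt6_general n W N' hN' m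
end

section
/- Let G be a simple game with a nonempty set V of veto players, V ≠ N, and let G' be the game on N \ V where S is winning iff S ∪ V is winning in G. If G' is a simple game (i.e., the empty coalition is losing in G'), then for every m, G is m-trade robust if and only if G' is m-trade robust. -/
/-!
Adding the veto players `V` to every coalition of a trading transform of `G'`, or removing
them from every coalition of a trading transform of `G`, gives again a trading transform,
since each player of `V` then lies in all or in none of the coalitions on either side.
Removal does not change winning or losing: the veto players lie in every winning `X i`,
and a player lying in every `X i` also lies in every `Y i` by the counting condition.
-/

namespace TradingTransform

variable {n j : ℕ} {X Y : Fin j → Finset (Fin n)}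

theorem union_const (h : TradingTransform X Y) (V : Finset (Fin n)) :
    TradingTransform (fun i => X i ∪ V) (fun i => Y i ∪ V) := by
  intro a
  by_cases ha : a ∈ V
  · simp [ha]
  · simpa [ha] using h a

theorem sdiff_const (h : TradingTransform X Y) (V : Finset (Fin n)) :
    TradingTransform (fun i => X i \ V) (fun i => Y i \ V) := by
  intro a
  by_cases ha : a ∈ V
  · simp [ha]
  · simpa [ha] using h a

theorem mem_right_of_forall_mem_left (h : TradingTransform X Y) {a : Fin n}
    (hX : ∀ i, a ∈ X i) (i : Fin j) : a ∈ Y i := by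
  have hXall : (Finset.univ.filter (fun i => a ∈ X i)).card = (Finset.univ : Finset (Fin j)).card := by
    rw [Finset.card_filter_eq_iff]
    exact fun i _ => hX i
  exact Finset.filter_card_eq (h a ▸ hXall) i (Finset.mem_univ i)

theorem subset_right_of_subset_left (h : TradingTransform X Y) {V : Finset (Fin n)}
    (hX : ∀ i, V ⊆ X i) (i : Fin j) : V ⊆ Y i :=
  fun _ ha => h.mem_right_of_forall_mem_left (fun i => hX i ha) i

end TradingTransform

section Reduction

variable {n : ℕ} {W : Finset (Fin n) → Prop} {V : Finset (Fin n)} {m : ℕ}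

theorem TradeRobustOn.reduce (hR : TradeRobustOn Finset.univ W m) :
    TradeRobustOn (Finset.univ \ V) (fun S => W (S ∪ V)) m := by
  rintro ⟨j, hj, hjm, X, Y, -, -, hXY, hXW, hYL⟩
  exact hR ⟨j, hj, hjm, fun i => X i ∪ V, fun i => Y i ∪ V,
    fun _ => Finset.subset_univ _, fun _ => Finset.subset_univ _, hXY.union_const V, hXW, hYL⟩

theorem TradeRobustOn.of_reduce (hV : ∀ S, W S → V ⊆ S)
    (hR : TradeRobustOn (Finset.univ \ V) (fun S => W (S ∪ V)) m) :
    TradeRobustOn Finset.univ W m := by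
  rintro ⟨j, hj, hjm, X, Y, -, -, hXY, hXW, hYL⟩
  have hVX : ∀ i, V ⊆ X i := fun i => hV _ (hXW i)
  have hVY : ∀ i, V ⊆ Y i := hXY.subset_right_of_subset_left hVX
  refine hR ⟨j, hj, hjm, fun i => X i \ V, fun i => Y i \ V,
    fun _ => Finset.sdiff_subset_sdiff (Finset.subset_univ _) le_rfl,
    fun _ => Finset.sdiff_subset_sdiff (Finset.subset_univ _) le_rfl,
    hXY.sdiff_const V, fun i => ?_, fun i => ?_⟩
  · simpa only [Finset.sdiff_union_of_subset (hVX i)] using hXW i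
  · simpa only [Finset.sdiff_union_of_subset (hVY i)] using hYL i

end Reduction

theorem stmt7_general (n : ℕ) (W : Finset (Fin n) → Prop)
    (V : Finset (Fin n)) (hV : ∀ i : Fin n, i ∈ V ↔ ∀ S, W S → i ∈ S)
    (m : ℕ) :
    TradeRobustOn Finset.univ W m ↔
      TradeRobustOn (Finset.univ \ V) (fun S => W (S ∪ V)) m :=
  ⟨TradeRobustOn.reduce,
    TradeRobustOn.of_reduce fun S hS _ hi => (hV _).mp hi S hS⟩

/-- Removing veto players does not affect `m`-trade robustness, provided the
reduced structure `G'` (on `N \ V`, with `S` winning iff `S ∪ V` is winning in `G`)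
is again a simple game, i.e., the empty coalition is losing in `G'`. -/
theorem stmt7 (n : ℕ) (W : Finset (Fin n) → Prop)
    (hmono : ∀ S T, S ⊆ T → W S → W T)
    (hne : ∃ S, W S) (hproper : ¬ W ∅)
    (V : Finset (Fin n)) (hV : ∀ i : Fin n, i ∈ V ↔ ∀ S, W S → i ∈ S)
    (hVne : V.Nonempty) (hVN : V ≠ Finset.univ)
    (hG' : ¬ W V)
    (m : ℕ) :
    TradeRobustOn Finset.univ W m ↔
      TradeRobustOn (Finset.univ \ V) (fun S => W (S ∪ V)) m :=
  stmt7_general n W V hV m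
end

section
/- A complete simple game with two types of voters is weighted if and only if M·P < 1, where M = max over winning types (x,y) and losing types (x',y') with x' ≥ x of (x'-x)/(y-y'), and P = max over winning types (x,y) and losing types (x',y') with x' < x of (y'-y)/(x-x'). Moreover 0 ≤ M < 1 and P ≥ 1. -/
/-!
Weights `w₁ > w₂ ≥ 0` separate a winning type `(x, y)` from a losing type `(x', y')` iff
`0 < (x - x') + (y - y') t` for the ratio `t = w₂ / w₁`, so weightedness means that some
rational `t ∈ [0, 1)` works for all such pairs. When `x ≤ x'`, completeness forces `y' < y` and
the condition reads `(x' - x) / (y - y') < t`; when `x' < x` it reads `(y' - y) / (x - x') · t < 1`.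
So the admissible ratios are exactly those in the open interval `(M, 1 / P)`, which contains a
rational number iff `M P < 1`. The bounds `0 ≤ M < 1` come from completeness again, and `P ≥ 1`
from the shift-minimal winning type.
-/

def IsUpClosed (n1 n2 : ℕ) (Win : ℕ → ℕ → Prop) : Prop :=
  ∀ x y x' y' : ℕ, x ≤ n1 → y ≤ n2 → x' ≤ x → x' + y' ≤ x + y → Win x' y' → Win x y

def Separates {R : Type*} [CommRing R] [PartialOrder R] (n1 n2 : ℕ) (Win : ℕ → ℕ → Prop)
    (w1 w2 : R) : Prop :=
  ∀ x y x' y' : ℕ, x ≤ n1 → y ≤ n2 → x' ≤ n1 → y' ≤ n2 → Win x y → ¬ Win x' y' →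
    0 < ((x : R) - x') * w1 + ((y : R) - y') * w2

def mRatios (n1 n2 : ℕ) (Win : ℕ → ℕ → Prop) : Set ℝ :=
  {s | ∃ x y x' y' : ℕ, x ≤ n1 ∧ y ≤ n2 ∧ x' ≤ n1 ∧ y' ≤ n2 ∧
    Win x y ∧ ¬ Win x' y' ∧ x ≤ x' ∧ s = ((x' : ℝ) - x) / ((y : ℝ) - y')}

def pRatios (n1 n2 : ℕ) (Win : ℕ → ℕ → Prop) : Set ℝ :=
  {s | ∃ x y x' y' : ℕ, x ≤ n1 ∧ y ≤ n2 ∧ x' ≤ n1 ∧ y' ≤ n2 ∧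
    Win x y ∧ ¬ Win x' y' ∧ x' < x ∧ s = ((y' : ℝ) - y) / ((x : ℝ) - x')}

namespace Separates

variable {n1 n2 : ℕ} {Win : ℕ → ℕ → Prop}

theorem mul_left_iff {R : Type*} [CommRing R] [LinearOrder R] [IsStrictOrderedRing R]
    {c w1 w2 : R} (hc : 0 < c) :
    Separates n1 n2 Win (c * w1) (c * w2) ↔ Separates n1 n2 Win w1 w2 := by
  refine forall_congr' fun x => forall_congr' fun y => forall_congr' fun x' => forall_congr'
    fun y' => ?_
  simp only [show ∀ a b : R, a * (c * w1) + b * (c * w2) = c * (a * w1 + b * w2) by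
    intros; ring, mul_pos_iff_of_pos_left hc]

theorem map_iff {R S : Type*} [CommRing R] [LinearOrder R] [CommRing S] [PartialOrder S]
    (f : R →+* S) (hf : StrictMono f) {w1 w2 : R} :
    Separates n1 n2 Win (f w1) (f w2) ↔ Separates n1 n2 Win w1 w2 := by
  refine forall_congr' fun x => forall_congr' fun y => forall_congr' fun x' => forall_congr'
    fun y' => ?_
  simp only [← hf.lt_iff_lt, map_zero, map_add, map_mul, map_sub, map_natCast]

end Separates

variable {n1 n2 : ℕ} {Win : ℕ → ℕ → Prop}

theorem exists_int_weights_iff_exists_rat :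
    (∃ w1 w2 : ℤ, w2 < w1 ∧ 0 ≤ w2 ∧ Separates n1 n2 Win w1 w2) ↔
      ∃ q : ℚ, 0 ≤ q ∧ q < 1 ∧ Separates n1 n2 Win 1 q := by
  have hcast {w1 w2 : ℤ} : Separates n1 n2 Win (w1 : ℚ) (w2 : ℚ) ↔ Separates n1 n2 Win w1 w2 :=
    Separates.map_iff (Int.castRingHom ℚ) Int.cast_strictMono
  constructor
  · rintro ⟨w1, w2, h12, h2, hsep⟩
    have h1 : (0 : ℚ) < w1 := by exact_mod_cast h2.trans_lt h12
    refine ⟨w2 / w1, by positivity, (div_lt_one h1).2 (by exact_mod_cast h12), ?_⟩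
    rw [← Separates.mul_left_iff h1, mul_one, mul_div_cancel₀ _ h1.ne']
    exact hcast.2 hsep
  · rintro ⟨q, hq0, hq1, hsep⟩
    refine ⟨q.den, q.num, Rat.num_lt_denom_iff.2 hq1, Rat.num_nonneg.2 hq0, hcast.1 ?_⟩
    rw [← Separates.mul_left_iff (show (0 : ℚ) < q.den by exact_mod_cast q.pos)] at hsep
    simpa only [mul_one, Rat.den_mul_eq_num, Int.cast_natCast] using hsep

theorem add_lt_add_of_win_of_not_win (hup : IsUpClosed n1 n2 Win) {x y x' y' : ℕ}
    (hx' : x' ≤ n1) (hy' : y' ≤ n2) (hw : Win x y) (hl : ¬ Win x' y') (hle : x ≤ x') :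
    x' + y' < x + y :=
  lt_of_not_ge fun h => hl (hup x' y' x y hx' hy' hle h hw)

theorem mRatios_subset_Ico (hup : IsUpClosed n1 n2 Win) : mRatios n1 n2 Win ⊆ Set.Ico 0 1 := by
  rintro _ ⟨x, y, x', y', -, -, hx', hy', hw, hl, hle, rfl⟩
  have hsum : (x' : ℝ) + y' < x + y := by
    exact_mod_cast add_lt_add_of_win_of_not_win hup hx' hy' hw hl hle
  have hle' : (x : ℝ) ≤ x' := by exact_mod_cast hle
  have hden : (0 : ℝ) < y - y' := by linarith
  exact ⟨div_nonneg (by linarith) hden.le, (div_lt_one hden).2 (by linarith)⟩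

theorem one_le_of_mem_upperBounds_pRatios {a b : ℕ} (ha : a ≤ n1) (hb : b + 1 ≤ n2)
    (ha0 : 0 < a) (hw : Win a b) (hl : ¬ Win (a - 1) (b + 1)) {P : ℝ}
    (hP : P ∈ upperBounds (pRatios n1 n2 Win)) : 1 ≤ P := by
  refine le_trans (le_of_eq ?_) (hP ⟨a, b, a - 1, b + 1, ha, by omega, by omega, hb, hw, hl,
    by omega, rfl⟩)
  rw [Nat.cast_sub (by omega : 1 ≤ a)]
  push_cast
  ring

theorem separates_one_iff (hup : IsUpClosed n1 n2 Win) {M P : ℝ}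
    (hM : IsGreatest (mRatios n1 n2 Win) M) (hP : IsGreatest (pRatios n1 n2 Win) P) (t : ℝ) :
    Separates n1 n2 Win 1 t ↔ M < t ∧ P * t < 1 := by
  constructor
  · intro hsep
    obtain ⟨x, y, x', y', hx, hy, hx', hy', hw, hl, hle, rfl⟩ := hM.1
    obtain ⟨u, v, u', v', hu, hv, hu', hv', hw', hl', hlt, rfl⟩ := hP.1
    have hsum : (x' : ℝ) + y' < x + y := by
      exact_mod_cast add_lt_add_of_win_of_not_win hup hx' hy' hw hl hle
    have hle' : (x : ℝ) ≤ x' := by exact_mod_cast hle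
    have hlt' : (u' : ℝ) < u := by exact_mod_cast hlt
    have hsepM := hsep x y x' y' hx hy hx' hy' hw hl
    have hsepP := hsep u v u' v' hu hv hu' hv' hw' hl'
    constructor
    · rw [div_lt_iff₀ (by linarith)]
      linarith
    · rw [div_mul_eq_mul_div, div_lt_one (by linarith)]
      linarith
  · rintro ⟨hMt, hPt⟩ x y x' y' hx hy hx' hy' hw hl
    have ht : 0 < t := ((mRatios_subset_Ico hup hM.1).1).trans_lt hMt
    rcases le_or_gt x x' with hle | hlt
    · have hsum : (x' : ℝ) + y' < x + y := by
        exact_mod_cast add_lt_add_of_win_of_not_win hup hx' hy' hw hl hle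
      have hle' : (x : ℝ) ≤ x' := by exact_mod_cast hle
      have hslope := (div_lt_iff₀ (by linarith)).1
        ((hM.2 ⟨x, y, x', y', hx, hy, hx', hy', hw, hl, hle, rfl⟩).trans_lt hMt)
      linarith
    · have hlt' : (x' : ℝ) < x := by exact_mod_cast hlt
      have hslope := (div_le_iff₀ (by linarith)).1
        (hP.2 ⟨x, y, x', y', hx, hy, hx', hy', hw, hl, hlt, rfl⟩)
      nlinarith

theorem exists_rat_between_iff_mul_lt_one {M P : ℝ} (hM : 0 ≤ M) (hP : 1 ≤ P) :
    (∃ q : ℚ, 0 ≤ q ∧ q < 1 ∧ M < q ∧ P * q < 1) ↔ M * P < 1 := by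
  have hP0 : 0 < P := one_pos.trans_le hP
  constructor
  · rintro ⟨q, -, -, hMq, hPq⟩
    nlinarith
  · intro hMP
    obtain ⟨q, hMq, hqP⟩ := exists_rat_btwn (show M < 1 / P by rwa [lt_div_iff₀ hP0])
    have hPq : P * q < 1 := by rwa [lt_div_iff₀ hP0, mul_comm] at hqP
    refine ⟨q, by exact_mod_cast hM.trans hMq.le, ?_, hMq, hPq⟩
    exact_mod_cast (show (q : ℝ) < 1 by nlinarith)

/-- A complete simple game with two types of voters (class sizes `n1, n2`,
winning coalition types given by `Win`) is weighted iff `M * P < 1`,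
where `M` and `P` are the extremal slope parameters; moreover `0 ≤ M < 1 ≤ P`. -/
theorem stmt8 (n1 n2 : ℕ) (Win : ℕ → ℕ → Prop)
    (hupset : ∀ x y x' y' : ℕ, x ≤ n1 → y ≤ n2 → x' ≤ x → x' + y' ≤ x + y →
      Win x' y' → Win x y)
    (hP1 : ∃ a b : ℕ, a ≤ n1 ∧ b + 1 ≤ n2 ∧ 0 < a ∧ Win a b ∧ ¬ Win (a - 1) (b + 1))
    (M P : ℝ)
    (hMmax : ∃ x y x' y' : ℕ, x ≤ n1 ∧ y ≤ n2 ∧ x' ≤ n1 ∧ y' ≤ n2 ∧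
      Win x y ∧ ¬ Win x' y' ∧ x ≤ x' ∧ M = ((x' : ℝ) - x) / ((y : ℝ) - y'))
    (hMub : ∀ x y x' y' : ℕ, x ≤ n1 → y ≤ n2 → x' ≤ n1 → y' ≤ n2 →
      Win x y → ¬ Win x' y' → x ≤ x' → ((x' : ℝ) - x) / ((y : ℝ) - y') ≤ M)
    (hPmax : ∃ x y x' y' : ℕ, x ≤ n1 ∧ y ≤ n2 ∧ x' ≤ n1 ∧ y' ≤ n2 ∧
      Win x y ∧ ¬ Win x' y' ∧ x' < x ∧ P = ((y' : ℝ) - y) / ((x : ℝ) - x'))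
    (hPub : ∀ x y x' y' : ℕ, x ≤ n1 → y ≤ n2 → x' ≤ n1 → y' ≤ n2 →
      Win x y → ¬ Win x' y' → x' < x → ((y' : ℝ) - y) / ((x : ℝ) - x') ≤ P) :
    ((∃ w1 w2 : ℤ, w2 < w1 ∧ 0 ≤ w2 ∧
        ∀ x y x' y' : ℕ, x ≤ n1 → y ≤ n2 → x' ≤ n1 → y' ≤ n2 →
          Win x y → ¬ Win x' y' →
          0 < ((x : ℤ) - x') * w1 + ((y : ℤ) - y') * w2) ↔ M * P < 1) ∧
      0 ≤ M ∧ M < 1 ∧ 1 ≤ P := by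
  obtain ⟨a, b, ha, hb, ha0, hw, hl⟩ := hP1
  have hM : IsGreatest (mRatios n1 n2 Win) M := ⟨hMmax, by
    rintro _ ⟨x, y, x', y', hx, hy, hx', hy', hw, hl, hle, rfl⟩
    exact hMub x y x' y' hx hy hx' hy' hw hl hle⟩
  have hP : IsGreatest (pRatios n1 n2 Win) P := ⟨hPmax, by
    rintro _ ⟨x, y, x', y', hx, hy, hx', hy', hw, hl, hlt, rfl⟩
    exact hPub x y x' y' hx hy hx' hy' hw hl hlt⟩
  obtain ⟨hM0, hM1⟩ := mRatios_subset_Ico hupset hM.1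
  have hP_one := one_le_of_mem_upperBounds_pRatios ha hb ha0 hw hl hP.2
  have hrat (q : ℚ) : Separates n1 n2 Win 1 q ↔ M < q ∧ P * q < 1 := by
    rw [← separates_one_iff hupset hM hP, ← Separates.map_iff (Rat.castHom ℝ) Rat.cast_strictMono,
      map_one, Rat.coe_castHom]
  refine ⟨?_, hM0, hM1, hP_one⟩
  simp_rw [← exists_rat_between_iff_mul_lt_one hM0 hP_one, ← hrat]
  exact exists_int_weights_iff_exists_rat
end

section
/- A complete simple game with two types of voters is weighted if and only if it is 2-trade robust. Equivalently, if M·P ≥ 1 (where M and P are the extremal slope parameters), then there exist two winning coalition types (α_1, β_1), (α_2, β_2) and two losing coalition types (γ_1, δ_1), (γ_2, δ_2) with α_1 + α_2 = γ_1 + γ_2 and β_1 + β_2 = δ_1 + δ_2. -/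
/-! A pair of a winning type `(x, y)` and a losing type `(x', y')` has a *gap*
`(x - x', (x + y) - (x' + y'))`; completeness says that no gap lies in the closed negative
quadrant, and a trade is a pair of opposite gaps. Any type on the way from the losing to the
winning type of a pair is itself winning or losing, so a gap that is the sum of two gaps of
the same sign pattern splits into one of them. For a gap `(-a, b)` and a gap `(c, -d)` with
`b c ≤ a d`, splitting the one with the larger first entry either produces two opposite gaps
or a pair of the same kind with smaller `a + c`; this Euclidean-type descent ends in a trade. Without trades the largest slope `a₀ / b₀` of gaps `(-a, b)` therefore separates them
strictly from the gaps `(c, -d)`, and the weights `w₂ = a₀ N + 1`, `w₁ = w₂ + b₀ N` with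
`N = n₁ + n₂ + 1` realise the game. -/

namespace TwoTypeGame

variable {n1 n2 : ℕ} {Win : ℕ → ℕ → Prop}

def IsUpset (n1 n2 : ℕ) (Win : ℕ → ℕ → Prop) : Prop :=
  ∀ x y x' y' : ℕ, x ≤ n1 → y ≤ n2 → x' ≤ x → x' + y' ≤ x + y → Win x' y' → Win x y

def IsWeighted (n1 n2 : ℕ) (Win : ℕ → ℕ → Prop) : Prop :=
  ∃ w1 w2 : ℤ, w2 < w1 ∧ 0 ≤ w2 ∧
    ∀ x y x' y' : ℕ, x ≤ n1 → y ≤ n2 → x' ≤ n1 → y' ≤ n2 →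
      Win x y → ¬ Win x' y' →
      0 < ((x : ℤ) - x') * w1 + ((y : ℤ) - y') * w2

def HasTrade (n1 n2 : ℕ) (Win : ℕ → ℕ → Prop) : Prop :=
  ∃ x1 y1 x2 y2 u1 v1 u2 v2 : ℕ,
    x1 ≤ n1 ∧ y1 ≤ n2 ∧ x2 ≤ n1 ∧ y2 ≤ n2 ∧
    u1 ≤ n1 ∧ v1 ≤ n2 ∧ u2 ≤ n1 ∧ v2 ≤ n2 ∧
    Win x1 y1 ∧ Win x2 y2 ∧ ¬ Win u1 v1 ∧ ¬ Win u2 v2 ∧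
    x1 + x2 = u1 + u2 ∧ y1 + y2 = v1 + v2

def IsGap (n1 n2 : ℕ) (Win : ℕ → ℕ → Prop) (dx ds : ℤ) : Prop :=
  ∃ x y x' y' : ℕ, x ≤ n1 ∧ y ≤ n2 ∧ x' ≤ n1 ∧ y' ≤ n2 ∧
    Win x y ∧ ¬ Win x' y' ∧ dx = (x : ℤ) - x' ∧ ds = ((x : ℤ) + y) - (x' + y')

theorem IsWeighted.not_hasTrade (h : IsWeighted n1 n2 Win) : ¬ HasTrade n1 n2 Win := by
  rintro ⟨x1, y1, x2, y2, u1, v1, u2, v2, hx1, hy1, hx2, hy2, hu1, hv1, hu2, hv2,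
    hw1, hw2, hl1, hl2, hx, hy⟩
  obtain ⟨w1, w2, -, -, hsep⟩ := h
  have h1 := hsep x1 y1 u1 v1 hx1 hy1 hu1 hv1 hw1 hl1
  have h2 := hsep x2 y2 u2 v2 hx2 hy2 hu2 hv2 hw2 hl2
  have hx' : (x1 : ℤ) + x2 = u1 + u2 := by exact_mod_cast hx
  have hy' : (y1 : ℤ) + y2 = v1 + v2 := by exact_mod_cast hy
  have hsum : ((x1 : ℤ) - u1) * w1 + ((y1 : ℤ) - v1) * w2 +
      (((x2 : ℤ) - u2) * w1 + ((y2 : ℤ) - v2) * w2) = 0 := by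
    linear_combination w1 * hx' + w2 * hy'
  linarith

theorem hasTrade_of_isGap_of_isGap_neg {dx ds : ℤ} (h : IsGap n1 n2 Win dx ds)
    (h' : IsGap n1 n2 Win (-dx) (-ds)) : HasTrade n1 n2 Win := by
  obtain ⟨x1, y1, u1, v1, hx1, hy1, hu1, hv1, hw1, hl1, rfl, rfl⟩ := h
  obtain ⟨x2, y2, u2, v2, hx2, hy2, hu2, hv2, hw2, hl2, hdx, hds⟩ := h'
  exact ⟨x1, y1, x2, y2, u1, v1, u2, v2, hx1, hy1, hx2, hy2, hu1, hv1, hu2, hv2,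
    hw1, hw2, hl1, hl2, by omega, by omega⟩

theorem IsGap.not_nonpos (hW : IsUpset n1 n2 Win) {dx ds : ℤ} (h : IsGap n1 n2 Win dx ds) :
    ¬ (dx ≤ 0 ∧ ds ≤ 0) := by
  rintro ⟨hdx, hds⟩
  obtain ⟨x, y, x', y', -, -, hx', hy', hw, hl, rfl, rfl⟩ := h
  exact hl (hW x' y' x y hx' hy' (by omega) (by omega) hw)

theorem IsGap.neg_add_split {a b c d : ℕ}
    (h : IsGap n1 n2 Win (-((a + c : ℕ) : ℤ)) ((b + d : ℕ) : ℤ)) :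
    IsGap n1 n2 Win (-a) b ∨ IsGap n1 n2 Win (-c) d := by
  obtain ⟨x, y, x', y', hx, hy, hx', hy', hw, hl, hdx, hds⟩ := h
  by_cases hz : Win (x + a) (y - a - b)
  · exact Or.inr ⟨x + a, y - a - b, x', y', by omega, by omega, hx', hy', hz, hl, by omega,
      by omega⟩
  · exact Or.inl ⟨x, y, x + a, y - a - b, hx, hy, by omega, by omega, hw, hz, by omega,
      by omega⟩

theorem IsGap.add_neg_split {a b c d : ℕ}
    (h : IsGap n1 n2 Win ((a + c : ℕ) : ℤ) (-((b + d : ℕ) : ℤ))) :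
    IsGap n1 n2 Win a (-b) ∨ IsGap n1 n2 Win c (-d) := by
  obtain ⟨x, y, x', y', hx, hy, hx', hy', hw, hl, hdx, hds⟩ := h
  by_cases hz : Win (x - a) (y + a + b)
  · exact Or.inr ⟨x - a, y + a + b, x', y', by omega, by omega, hx', hy', hz, hl, by omega,
      by omega⟩
  · exact Or.inl ⟨x, y, x - a, y + a + b, hx, hy, by omega, by omega, hw, hz, by omega,
      by omega⟩

theorem hasTrade_of_slope_le (hW : IsUpset n1 n2 Win) {a b c d : ℕ}
    (hM : IsGap n1 n2 Win (-a) b) (hP : IsGap n1 n2 Win c (-d)) (hslope : b * c ≤ a * d) :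
    HasTrade n1 n2 Win := by
  have hb : 0 < b := by have := hM.not_nonpos hW; omega
  have hc : 0 < c := by have := hP.not_nonpos hW; omega
  have ha : 0 < a := Nat.pos_of_ne_zero fun h => by simp [h] at hslope; omega
  rcases le_or_gt c a with hca | hac
  · obtain ⟨k, rfl⟩ : ∃ k, a = c + k := ⟨a - c, by omega⟩
    rcases le_or_gt b d with hbd | hdb
    · -- both gaps shrink, to `(-c, b)` and `(c, -b)`
      obtain ⟨j, rfl⟩ : ∃ j, d = b + j := ⟨d - b, by omega⟩
      have hM' : IsGap n1 n2 Win (-c) b := by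
        rw [← add_zero b] at hM
        exact hM.neg_add_split.resolve_right fun h => h.not_nonpos hW (by omega)
      have hP' : IsGap n1 n2 Win c (-b) := by
        rw [← add_zero c] at hP
        exact hP.add_neg_split.resolve_right fun h => h.not_nonpos hW (by omega)
      exact hasTrade_of_isGap_of_isGap_neg hM' (by simpa using hP')
    · obtain ⟨j, rfl⟩ : ∃ j, b = d + j := ⟨b - d, by omega⟩
      rcases hM.neg_add_split with hM' | hM'
      · exact hasTrade_of_isGap_of_isGap_neg hM' (by simpa using hP)
      · exact hasTrade_of_slope_le hW hM' hP (by nlinarith)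
  · obtain ⟨k, rfl⟩ : ∃ k, c = a + k := ⟨c - a, by omega⟩
    have hbd : b ≤ d := le_of_lt (Nat.lt_of_mul_lt_mul_left (a := a) (by nlinarith))
    obtain ⟨j, rfl⟩ : ∃ j, d = b + j := ⟨d - b, by omega⟩
    rcases hP.add_neg_split with hP' | hP'
    · exact hasTrade_of_isGap_of_isGap_neg hM (by simpa using hP')
    · exact hasTrade_of_slope_le hW hM hP' (by nlinarith)
termination_by a + c

theorem exists_max_slope (hW : IsUpset n1 n2 Win) :
    ∃ a0 b0 : ℕ, 0 < b0 ∧ (a0 = 0 ∨ IsGap n1 n2 Win (-a0) b0) ∧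
      ∀ a b : ℕ, IsGap n1 n2 Win (-a) b → a * b0 ≤ a0 * b := by
  classical
  let S := insert (0, 1) ((Finset.range (n1 + 1) ×ˢ Finset.range (n1 + n2 + 1)).filter
    fun p : ℕ × ℕ => IsGap n1 n2 Win (-p.1) p.2)
  obtain ⟨⟨a0, b0⟩, hmem, hmax⟩ :=
    S.exists_max_image (fun p => (p.1 : ℚ) / p.2) (Finset.insert_nonempty _ _)
  have hS : ∀ {a b : ℕ}, (a, b) ∈ S → (a = 0 ∧ b = 1) ∨ IsGap n1 n2 Win (-a) b := by
    intro a b h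
    simp only [S, Finset.mem_insert, Prod.mk.injEq, Finset.mem_filter] at h
    exact h.imp id And.right
  have hb0 : 0 < b0 := by
    rcases hS hmem with ⟨-, rfl⟩ | h
    · exact one_pos
    · have := h.not_nonpos hW; omega
  refine ⟨a0, b0, hb0, (hS hmem).imp And.left id, fun a b hab => ?_⟩
  have hb : 0 < b := by have := hab.not_nonpos hW; omega
  have hab_mem : (a, b) ∈ S := by
    refine Finset.mem_insert_of_mem (Finset.mem_filter.2 ⟨?_, hab⟩)
    obtain ⟨x, y, x', y', -, hy, hx', -, -, -, hdx, hds⟩ := hab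
    simp only [Finset.mem_product, Finset.mem_range]
    omega
  have := hmax (a, b) hab_mem
  rw [div_le_div_iff₀ (by exact_mod_cast hb) (by exact_mod_cast hb0)] at this
  exact_mod_cast this

theorem IsGap.slope_separation (hW : IsUpset n1 n2 Win) {a0 b0 : ℕ} (hb0 : 0 < b0)
    (hM : ∀ a b : ℕ, IsGap n1 n2 Win (-a) b → a * b0 ≤ a0 * b)
    (hP : ∀ c d : ℕ, IsGap n1 n2 Win c (-d) → a0 * d < b0 * c)
    {dx ds : ℤ} (h : IsGap n1 n2 Win dx ds) :
    0 < b0 * dx + a0 * ds ∨ (b0 * dx + a0 * ds = 0 ∧ 0 < ds) := by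
  have hnn := h.not_nonpos hW
  rcases le_or_gt dx 0 with hdx | hdx
  · obtain ⟨a, rfl⟩ : ∃ a : ℕ, dx = -a := ⟨(-dx).toNat, by omega⟩
    lift ds to ℕ using by omega with b
    have hab : (a : ℤ) * b0 ≤ a0 * b := by exact_mod_cast hM a b h
    rcases hab.lt_or_eq with hlt | heq
    · left; linarith
    · right; constructor <;> [linarith; omega]
  · left
    rcases le_or_gt ds 0 with hds | hds
    · lift dx to ℕ using hdx.le with c
      obtain ⟨d, rfl⟩ : ∃ d : ℕ, ds = -d := ⟨(-ds).toNat, by omega⟩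
      have hcd : (a0 : ℤ) * d < b0 * c := by exact_mod_cast hP c d h
      linarith
    · positivity

theorem isWeighted_of_separation {p q : ℤ} (hp : 0 < p) (hq : 0 ≤ q)
    (hsep : ∀ {dx ds : ℤ}, IsGap n1 n2 Win dx ds →
      0 < p * dx + q * ds ∨ (p * dx + q * ds = 0 ∧ 0 < ds)) :
    IsWeighted n1 n2 Win := by
  set N : ℤ := n1 + n2 + 1
  refine ⟨p * N + (q * N + 1), q * N + 1, by simp only [lt_add_iff_pos_left]; positivity,
    by positivity, fun x y x' y' hx hy hx' hy' hw hl => ?_⟩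
  have hval : ((x : ℤ) - x') * (p * N + (q * N + 1)) + ((y : ℤ) - y') * (q * N + 1) =
      N * (p * ((x : ℤ) - x') + q * ((x + y) - (x' + y'))) + ((x + y) - (x' + y')) := by
    ring
  rw [hval]
  rcases hsep ⟨x, y, x', y', hx, hy, hx', hy', hw, hl, rfl, rfl⟩ with hpos | ⟨hzero, hds⟩
  · -- `N > |Δs|`, so `N * f + Δs > 0` as soon as `f ≥ 1`
    have hN : N ≤ N * (p * ((x : ℤ) - x') + q * ((x + y) - (x' + y'))) :=
      le_mul_of_one_le_right (by positivity) hpos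
    omega
  · rw [hzero]; linarith

theorem isWeighted_of_not_hasTrade (hW : IsUpset n1 n2 Win) (h : ¬ HasTrade n1 n2 Win) :
    IsWeighted n1 n2 Win := by
  obtain ⟨a0, b0, hb0, hgap0, hM⟩ := exists_max_slope hW
  refine isWeighted_of_separation (by exact_mod_cast hb0) (Nat.cast_nonneg a0)
    (IsGap.slope_separation hW hb0 hM fun c d hP => ?_)
  by_contra! hle
  rcases hgap0 with rfl | hM0
  · have := hP.not_nonpos hW
    have : 0 < b0 * c := Nat.mul_pos hb0 (by omega)
    omega
  · exact h (hasTrade_of_slope_le hW hM0 hP hle)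

end TwoTypeGame

/-- A complete simple game with two types of voters is weighted iff it is
`2`-trade robust. -/
theorem stmt9 (n1 n2 : ℕ) (Win : ℕ → ℕ → Prop)
    (hupset : ∀ x y x' y' : ℕ, x ≤ n1 → y ≤ n2 → x' ≤ x → x' + y' ≤ x + y →
      Win x' y' → Win x y) :
    (∃ w1 w2 : ℤ, w2 < w1 ∧ 0 ≤ w2 ∧
        ∀ x y x' y' : ℕ, x ≤ n1 → y ≤ n2 → x' ≤ n1 → y' ≤ n2 →
          Win x y → ¬ Win x' y' →
          0 < ((x : ℤ) - x') * w1 + ((y : ℤ) - y') * w2) ↔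
      ¬ ∃ x1 y1 x2 y2 u1 v1 u2 v2 : ℕ,
          x1 ≤ n1 ∧ y1 ≤ n2 ∧ x2 ≤ n1 ∧ y2 ≤ n2 ∧
          u1 ≤ n1 ∧ v1 ≤ n2 ∧ u2 ≤ n1 ∧ v2 ≤ n2 ∧
          Win x1 y1 ∧ Win x2 y2 ∧ ¬ Win u1 v1 ∧ ¬ Win u2 v2 ∧
          x1 + x2 = u1 + u2 ∧ y1 + y2 = v1 + v2 :=
  ⟨TwoTypeGame.IsWeighted.not_hasTrade, TwoTypeGame.isWeighted_of_not_hasTrade hupset⟩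
end

section
/- Every complete simple game with exactly one shift-minimal winning coalition type (r = 1), with no null players and no veto players, and with t ≥ 3 equivalence classes of voters is not 2-invariant trade robust: writing the unique shift-minimal winning type as m = (m_1,...,m_t) with 1 ≤ m_i ≤ n_i - 1 for all i, the types a = (m_1-1, m_2+1, m_3+1, m_4,...,m_t) and b = (m_1+1, m_2-1, m_3-1, m_4,...,m_t) are losing, and ⟨m, m; a, b⟩ is a 2-trade (a + b = m + m componentwise). -/
/-!
Write `eⱼ` for the `j`-th unit vector. Since every `mᵢ ≥ 1`, the truncated subtractions in `a` and
`b` are exact, so `a + e₀ = m + e₁ + e₂` and `b + e₁ + e₂ = m + e₀`; adding these gives `a + b = m + m`.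
Summing the first identity over the classes `≤ 0` gives `a₀ + 1 = m₀`, and summing the second
over the classes `≤ 2` gives `b₀ + b₁ + b₂ + 2 = m₀ + m₁ + m₂ + 1`, so both types fail the
prefix-sum test for `m`.
-/

open Finset

theorem Finset.sum_lt_sum_of_add_eq_add {ι M : Type*} [AddCommMonoid M] [LinearOrder M]
    [IsOrderedCancelAddMonoid M] {S : Finset ι} {s m c d : ι → M}
    (h : ∀ i ∈ S, s i + c i = m i + d i) (hdc : ∑ i ∈ S, d i < ∑ i ∈ S, c i) :
    ∑ i ∈ S, s i < ∑ i ∈ S, m i := by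
  have hsum : ∑ i ∈ S, s i + ∑ i ∈ S, c i = ∑ i ∈ S, m i + ∑ i ∈ S, d i := by
    rw [← sum_add_distrib, ← sum_add_distrib]
    exact sum_congr rfl h
  by_contra! hms
  exact (add_lt_add_of_le_of_lt hms hdc).ne hsum.symm

theorem Fin.sum_filter_le_pi_single {t : ℕ} {M : Type*} [AddCommMonoid M] (j k : Fin t)
    (x : M) : ∑ i ∈ univ.filter (· ≤ k), Pi.single j x i = if j ≤ k then x else 0 := by
  simp [sum_pi_single']

/-- A complete simple game with a unique shift-minimal winning coalition type,
no nulls, no vetoers, and `t ≥ 3` equivalence classes is not `2`-invariant trade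
robust: the explicit types `a` and `b` are losing and `a + b = m + m`. -/
theorem stmt11 (t : ℕ) (ht : 3 ≤ t) (n m : Fin t → ℕ)
    (hm : ∀ i, 1 ≤ m i ∧ m i ≤ n i - 1) :
    let a : Fin t → ℕ := fun i =>
      if (i : ℕ) = 0 then m i - 1 else
      if (i : ℕ) = 1 then m i + 1 else
      if (i : ℕ) = 2 then m i + 1 else m i
    let b : Fin t → ℕ := fun i =>
      if (i : ℕ) = 0 then m i + 1 else
      if (i : ℕ) = 1 then m i - 1 else
      if (i : ℕ) = 2 then m i - 1 else m i
    let Win : (Fin t → ℕ) → Prop := fun s => ∀ k : Fin t,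
      (∑ i ∈ Finset.univ.filter (· ≤ k), m i) ≤
        ∑ i ∈ Finset.univ.filter (· ≤ k), s i
    (∀ i, a i ≤ n i) ∧ (∀ i, b i ≤ n i) ∧ ¬ Win a ∧ ¬ Win b ∧
      (∀ i, a i + b i = m i + m i) := by
  intro a b Win
  let e : Fin t → Fin t → ℕ := fun j => Pi.single j 1
  let i₀ : Fin t := ⟨0, by omega⟩
  let i₁ : Fin t := ⟨1, by omega⟩
  let i₂ : Fin t := ⟨2, by omega⟩
  have ha : ∀ i, a i + e i₀ i = m i + (e i₁ i + e i₂ i) := by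
    intro i
    have := hm i
    simp only [a, e, Pi.single_apply, Fin.ext_iff, i₀, i₁, i₂]
    split_ifs <;> omega
  have hb : ∀ i, b i + (e i₁ i + e i₂ i) = m i + e i₀ i := by
    intro i
    have := hm i
    simp only [b, e, Pi.single_apply, Fin.ext_iff, i₀, i₁, i₂]
    split_ifs <;> omega
  refine ⟨fun i => ?_, fun i => ?_, fun hwin => ?_, fun hwin => ?_, fun i => ?_⟩
  · have := hm i
    simp only [a]
    split_ifs <;> omega
  · have := hm i
    simp only [b]
    split_ifs <;> omega
  · refine (sum_lt_sum_of_add_eq_add (fun i _ => ha i) ?_).not_ge (hwin i₀)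
    simp only [e, sum_add_distrib, Fin.sum_filter_le_pi_single]
    simp [i₀, i₁, i₂, Fin.le_def]
  · refine (sum_lt_sum_of_add_eq_add (fun i _ => hb i) ?_).not_ge (hwin i₂)
    simp only [e, sum_add_distrib, Fin.sum_filter_le_pi_single]
    simp [i₀, i₁, i₂, Fin.le_def]
  · have := ha i
    have := hb i
    omega
end

section
/- A complete simple game with t = 2 equivalence classes, no nulls, no vetoers, and unique shift-minimal winning type (m_1, m_2) with 2 ≤ m_2 ≤ n_2 - 2 is not 2-invariant trade robust: the types (m_1 - 1, m_2 + 2) and (m_1 + 1, m_2 - 2) are losing and sum to twice (m_1, m_2). -/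
/-- A complete simple game with `t = 2` classes, no nulls, no vetoers, and unique
shift-minimal winning type `(m1, m2)` with `2 ≤ m2 ≤ n2 - 2` is not `2`-invariant
trade robust. -/
theorem stmt12 (n1 n2 m1 m2 : ℕ) (h1 : 1 ≤ m1) (h2 : m1 ≤ n1 - 1)
    (h3 : 2 ≤ m2) (h4 : m2 ≤ n2 - 2) :
    let Win : ℕ → ℕ → Prop := fun x y => m1 ≤ x ∧ m1 + m2 ≤ x + y
    (m1 - 1 ≤ n1 ∧ m2 + 2 ≤ n2 ∧ m1 + 1 ≤ n1 ∧ m2 - 2 ≤ n2) ∧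
      ¬ Win (m1 - 1) (m2 + 2) ∧ ¬ Win (m1 + 1) (m2 - 2) ∧
      (m1 - 1) + (m1 + 1) = 2 * m1 ∧ (m2 + 2) + (m2 - 2) = 2 * m2 := by
  intro Win
  refine ⟨⟨by omega, by omega, by omega, by omega⟩, fun hwin => ?_, fun hwin => ?_,
    by omega, by omega⟩
  · have too_few_first_class : m1 ≤ m1 - 1 := hwin.1
    omega
  · have too_few_in_total : m1 + m2 ≤ m1 + 1 + (m2 - 2) := hwin.2
    omega
end

section
/- A complete simple game with t = 2 equivalence classes and unique shift-minimal winning type (m_1, 1) (i.e., m_2 = 1) is weighted: assigning weight n_2 to each player of class 1 and weight 1 to each player of class 2 with quota m_1·n_2 + 1 represents the game. -/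
/-- The winning types of the game with unique shift-minimal winning type `(m, 1)`. -/
def IsWinningType (m x y : ℕ) : Prop := m ≤ x ∧ m + 1 ≤ x + y

lemma quota_le_of_isWinningType {w m x y : ℕ} (hw : 1 ≤ w) (h : IsWinningType m x y) :
    m * w + 1 ≤ x * w + y := by
  obtain ⟨hmx, hmxy⟩ := h
  rcases hmx.lt_or_eq with hlt | rfl
  · calc m * w + 1 ≤ (m + 1) * w := by rw [add_one_mul]; omega
      _ ≤ x * w := Nat.mul_le_mul_right w hlt
      _ ≤ x * w + y := Nat.le_add_right _ _
  · omega

lemma lt_quota_of_not_isWinningType {w m x y : ℕ} (hy : y ≤ w) (h : ¬ IsWinningType m x y) :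
    x * w + y < m * w + 1 := by
  unfold IsWinningType at h
  by_cases hxm : x < m
  · calc x * w + y ≤ (x + 1) * w := by rw [add_one_mul]; omega
      _ ≤ m * w := Nat.mul_le_mul_right w hxm
      _ < m * w + 1 := Nat.lt_succ_self _
  · obtain ⟨rfl, rfl⟩ : x = m ∧ y = 0 := by omega
    exact Nat.lt_succ_self _

theorem stmt13_general (n1 n2 m1 : ℕ) (h3 : 2 ≤ n2) :
    ∀ x y x' y' : ℕ, x ≤ n1 → y ≤ n2 → x' ≤ n1 → y' ≤ n2 →
      (m1 ≤ x ∧ m1 + 1 ≤ x + y) → ¬ (m1 ≤ x' ∧ m1 + 1 ≤ x' + y') →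
      m1 * n2 + 1 ≤ x * n2 + y ∧ x' * n2 + y' < m1 * n2 + 1 :=
  fun _ _ _ _ _ _ _ hy' hwin hlose =>
    ⟨quota_le_of_isWinningType (by omega) hwin, lt_quota_of_not_isWinningType hy' hlose⟩

/-- A complete simple game with `t = 2` classes and unique shift-minimal winning
type `(m1, 1)` is weighted by weights `(n2, 1)` with quota `m1 * n2 + 1`. -/
theorem stmt13 (n1 n2 m1 : ℕ) (h1 : 1 ≤ m1) (h2 : m1 ≤ n1) (h3 : 2 ≤ n2) :
    ∀ x y x' y' : ℕ, x ≤ n1 → y ≤ n2 → x' ≤ n1 → y' ≤ n2 →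
      (m1 ≤ x ∧ m1 + 1 ≤ x + y) → ¬ (m1 ≤ x' ∧ m1 + 1 ≤ x' + y') →
      m1 * n2 + 1 ≤ x * n2 + y ∧ x' * n2 + y' < m1 * n2 + 1 :=
  stmt13_general n1 n2 m1 h3
end

section
/- A complete simple game with t = 2 equivalence classes of sizes n_1, n_2, unique shift-minimal winning type (m_1, n_2 - 1), and n_1 ≥ m_1 + n_2 - 2 is weighted by weights (w_1, w_2) = (n_1 - m_1 + 2, n_1 - m_1 + 1) and quota q = m_1·w_1 + (n_2 - 1)·w_2: every winning type has weight at least q and every losing type has weight strictly less than q. -/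
/-!
Since `w1 = w2 + 1`, a type `(x, y)` weighs `(x + y) * w2 + x` and the quota is
`(m1 + (n2 - 1)) * w2 + m1`, so the weight orders types lexicographically by `(x + y, x)`:
a deficit of one in `x + y` costs `w2`, which the excess of `x` over `m1` can never repay because
`x ≤ n1 < w2 + m1`.
-/

theorem Nat.mul_add_lt_mul_add_of_lt_of_lt_add {w c m s x : ℕ} (hs : s < c) (hx : x < w + m) :
    s * w + x < c * w + m :=
  calc s * w + x < s * w + w + m := by omega
    _ = (s + 1) * w + m := by rw [Nat.add_one_mul]
    _ ≤ c * w + m := by gcongr; exact hs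

theorem stmt14_general (n1 n2 m1 : ℕ) :
    let w1 := n1 - m1 + 2
    let w2 := n1 - m1 + 1
    let q := m1 * w1 + (n2 - 1) * w2
    ∀ x y : ℕ, x ≤ n1 → y ≤ n2 →
      ((m1 ≤ x ∧ m1 + (n2 - 1) ≤ x + y) → q ≤ x * w1 + y * w2) ∧
      (¬ (m1 ≤ x ∧ m1 + (n2 - 1) ≤ x + y) → x * w1 + y * w2 < q) := by
  intro w1 w2 q x y hx hy
  have weight_eq : x * w1 + y * w2 = (x + y) * w2 + x := by simp only [w1, w2]; ring
  have quota_eq : q = (m1 + (n2 - 1)) * w2 + m1 := by simp only [q, w1, w2]; ring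
  rw [weight_eq, quota_eq]
  refine ⟨fun ⟨hm, hs⟩ => by gcongr, fun hlose => ?_⟩
  rcases Nat.lt_or_ge x m1 with hx_lt | hm
  · have hs : x + y ≤ m1 + (n2 - 1) := by omega
    exact Nat.add_lt_add_of_le_of_lt (Nat.mul_le_mul_right w2 hs) hx_lt
  · exact Nat.mul_add_lt_mul_add_of_lt_of_lt_add (by omega) (by omega)

/-- A complete simple game with `t = 2` classes, unique shift-minimal winning type
`(m1, n2 - 1)`, and `n1 ≥ m1 + n2 - 2` is weighted by weights
`(n1 - m1 + 2, n1 - m1 + 1)` and quota `m1 * w1 + (n2 - 1) * w2`. -/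
theorem stmt14 (n1 n2 m1 : ℕ) (h1 : 1 ≤ m1) (h2 : m1 ≤ n1 - 1) (h3 : 2 ≤ n2)
    (h4 : m1 + n2 - 2 ≤ n1) :
    let w1 := n1 - m1 + 2
    let w2 := n1 - m1 + 1
    let q := m1 * w1 + (n2 - 1) * w2
    ∀ x y : ℕ, x ≤ n1 → y ≤ n2 →
      ((m1 ≤ x ∧ m1 + (n2 - 1) ≤ x + y) → q ≤ x * w1 + y * w2) ∧
      (¬ (m1 ≤ x ∧ m1 + (n2 - 1) ≤ x + y) → x * w1 + y * w2 < q) :=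
  stmt14_general n1 n2 m1
end

section
/- For m ≥ 3, the complete simple game with class sizes n = (2, m, m) and shift-minimal winning coalition types w_1 = (2, 0, 1) and w_2 = (1, 1, m-1) is not m-invariant trade robust: with maximal losing types l_1 = (2,0,0), l_2 = (1,0,m), l_4 = (0,m,m), the identity m·w_2 = 1·l_1 + (m-2)·l_2 + 1·l_4 holds componentwise, giving a trading transform of length m from m copies of the winning type w_2 to losing types. -/
/-- Dominance (partial-sums order) for coalition types with three classes. -/
def Dom3 (s w : ℕ × ℕ × ℕ) : Prop :=
  w.1 ≤ s.1 ∧ w.1 + w.2.1 ≤ s.1 + s.2.1 ∧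
    w.1 + w.2.1 + w.2.2 ≤ s.1 + s.2.1 + s.2.2

theorem not_dom3_of_fst_lt {s w : ℕ × ℕ × ℕ} (h : s.1 < w.1) : ¬ Dom3 s w :=
  fun hd => absurd hd.1 (Nat.not_le.2 h)

theorem not_dom3_of_fst_add_lt {s w : ℕ × ℕ × ℕ} (h : s.1 + s.2.1 < w.1 + w.2.1) :
    ¬ Dom3 s w :=
  fun hd => absurd hd.2.1 (Nat.not_le.2 h)

theorem not_dom3_of_sum_lt {s w : ℕ × ℕ × ℕ}
    (h : s.1 + s.2.1 + s.2.2 < w.1 + w.2.1 + w.2.2) : ¬ Dom3 s w :=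
  fun hd => absurd hd.2.2 (Nat.not_le.2 h)

theorem Nat.mul_sub_one_eq_sub_two_mul_add {m : ℕ} (hm : 2 ≤ m) :
    m * (m - 1) = (m - 2) * m + m := by
  obtain ⟨k, rfl⟩ := Nat.exists_eq_add_of_le' hm
  simp only [Nat.add_sub_cancel, Nat.add_one_sub_one]
  ring

/-- For `m ≥ 3`, the complete simple game with class sizes `(2, m, m)` and
shift-minimal winning types `(2,0,1)`, `(1,1,m-1)` is not `m`-invariant trade
robust: `m·w2 = l1 + (m-2)·l2 + l4` with `l1, l2, l4` losing. -/
theorem stmt15 (m : ℕ) (hm : 3 ≤ m) :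
    let w2 : ℕ × ℕ × ℕ := (1, 1, m - 1)
    let Win : ℕ × ℕ × ℕ → Prop := fun s => Dom3 s (2, 0, 1) ∨ Dom3 s w2
    let l1 : ℕ × ℕ × ℕ := (2, 0, 0)
    let l2 : ℕ × ℕ × ℕ := (1, 0, m)
    let l4 : ℕ × ℕ × ℕ := (0, m, m)
    (l1.1 ≤ 2 ∧ l1.2.1 ≤ m ∧ l1.2.2 ≤ m) ∧
      (l2.1 ≤ 2 ∧ l2.2.1 ≤ m ∧ l2.2.2 ≤ m) ∧
      (l4.1 ≤ 2 ∧ l4.2.1 ≤ m ∧ l4.2.2 ≤ m) ∧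
      ¬ Win l1 ∧ ¬ Win l2 ∧ ¬ Win l4 ∧
      m * w2.1 = 1 * l1.1 + (m - 2) * l2.1 + 1 * l4.1 ∧
      m * w2.2.1 = 1 * l1.2.1 + (m - 2) * l2.2.1 + 1 * l4.2.1 ∧
      m * w2.2.2 = 1 * l1.2.2 + (m - 2) * l2.2.2 + 1 * l4.2.2 ∧
      1 + (m - 2) + 1 = m := by
  intro w2 Win l1 l2 l4
  have l1_losing : ¬ Win l1 := not_or.2
    ⟨not_dom3_of_sum_lt (show 2 + 0 + 0 < 2 + 0 + 1 by omega),
      not_dom3_of_sum_lt (show 2 + 0 + 0 < 1 + 1 + (m - 1) by omega)⟩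
  have l2_losing : ¬ Win l2 := not_or.2
    ⟨not_dom3_of_fst_lt (show 1 < 2 by omega),
      not_dom3_of_fst_add_lt (show 1 + 0 < 1 + 1 by omega)⟩
  have l4_losing : ¬ Win l4 := not_or.2
    ⟨not_dom3_of_fst_lt (show 0 < 2 by omega), not_dom3_of_fst_lt (show 0 < 1 by omega)⟩
  have third_coord : m * (m - 1) = 1 * 0 + (m - 2) * m + 1 * m := by
    rw [Nat.mul_sub_one_eq_sub_two_mul_add (by omega)]; ring
  exact ⟨⟨le_rfl, Nat.zero_le m, Nat.zero_le m⟩, ⟨one_le_two, Nat.zero_le m, le_rfl⟩,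
    ⟨Nat.zero_le 2, le_rfl, le_rfl⟩, l1_losing, l2_losing, l4_losing,
    show m * 1 = 1 * 2 + (m - 2) * 1 + 1 * 0 by omega,
    show m * 1 = 1 * 0 + (m - 2) * 0 + 1 * m by ring, third_coord, by omega⟩
end

section
/- For m ≥ 3, the complete simple game with class sizes n = (2, m, m) and shift-minimal winning types w_1 = (2,0,1), w_2 = (1,1,m-1) is (m-1)-invariant trade robust: there are no nonnegative integers a, b, c, d, e, f with 0 < a + b = c + d + e + f ≤ m - 1 and a·w_1 + b·w_2 ≤ c·l_1 + d·l_2 + e·l_3 + f·l_4 componentwise, where l_1 = (2,0,0), l_2 = (1,0,m), l_3 = (1,1,m-2), l_4 = (0,m,m) are the maximal losing types. -/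
/-- For `m ≥ 3`, the complete simple game with class sizes `(2, m, m)` and
shift-minimal winning types `w1 = (2,0,1)`, `w2 = (1,1,m-1)` is `(m-1)`-invariant
trade robust: any solution of `a·w1 + b·w2 ≤ c·l1 + d·l2 + e·l3 + f·l4`
(componentwise) with `a + b = c + d + e + f > 0` requires `a + b ≥ m`, where
`l1 = (2,0,0)`, `l2 = (1,0,m)`, `l3 = (1,1,m-2)`, `l4 = (0,m,m)` are the maximal
losing types. -/
theorem stmt16 (m : ℕ) (hm : 3 ≤ m) :
    ∀ a b c d e f : ℕ, a + b = c + d + e + f → 0 < a + b →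
      a * 2 + b * 1 ≤ c * 2 + d * 1 + e * 1 + f * 0 →
      a * 0 + b * 1 ≤ c * 0 + d * 0 + e * 1 + f * m →
      a * 1 + b * (m - 1) ≤ c * 0 + d * m + e * (m - 2) + f * m →
      m ≤ a + b := by
  intro a b c d e f h1 h2 h3 h4 h5
  obtain ⟨p, rfl⟩ : ∃ p, m = p + 2 := ⟨m - 2, by omega⟩
  have hp1 : p + 2 - 1 = p + 1 := by omega
  have hp2 : p + 2 - 2 = p := by omega
  rw [hp1, hp2] at h5
  simp only [mul_zero, mul_one, zero_mul, one_mul, zero_add, add_zero] at h3 h4 h5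
  -- from component 1 and the count equation
  have hc : a + f ≤ c := by omega
  -- multiply the count equation by p
  have hk1 : c * p + d * p + e * p + f * p = a * p + b * p := by
    have := congrArg (· * p) h1
    simp only [add_mul] at this
    linarith
  -- multiply hc by p
  have hk2 : a * p + f * p ≤ c * p := by
    have := mul_le_mul_left hc p
    simp only [add_mul] at this
    linarith
  -- expand products in h4 and h5
  have h4' : b ≤ e + (f * p + 2 * f) := by
    have hfe : f * (p + 2) = f * p + 2 * f := by ring
    linarith [h4]
  have h5' : a + (b * p + b) ≤ (d * p + 2 * d) + e * p + (f * p + 2 * f) := by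
    have e1 : b * (p + 1) = b * p + b := by ring
    have e2 : d * (p + 2) = d * p + 2 * d := by ring
    have e3 : f * (p + 2) = f * p + 2 * f := by ring
    linarith [h5]
  rcases Nat.eq_zero_or_pos f with hf | hf
  · subst hf
    simp only [zero_mul, mul_zero, add_zero] at h4' h5' hk1 hk2 hc h1
    -- b ≤ e, a ≤ c, a+b = c+d+e, and key: a+b ≤ 2d force a+b = 0, contradiction
    linarith
  · have hfp : p ≤ f * p := Nat.le_mul_of_pos_left p hf
    linarith
end

section
/- For each l ≥ 0, the complete simple game with class sizes n = (n_1, n_2, 5 + 2l) where n_1 ≥ 3 + 2l and n_2 ≥ 3, and shift-minimal winning coalition types w_1 = (l+1, 1, l+2) and w_2 = (0, 1, 2(l+2)), is not 3-trade robust: there exist three winning coalition types and three losing coalition types with equal componentwise sums. -/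
namespace Dom3

theorem refl (s : ℕ × ℕ × ℕ) : Dom3 s s :=
  ⟨le_rfl, le_rfl, le_rfl⟩

variable {s w : ℕ × ℕ × ℕ}

theorem not_of_fst_lt (h : s.1 < w.1) : ¬ Dom3 s w :=
  fun hd => absurd hd.1 h.not_ge

theorem not_of_fst_add_snd_lt (h : s.1 + s.2.1 < w.1 + w.2.1) : ¬ Dom3 s w :=
  fun hd => absurd hd.2.1 h.not_ge

theorem not_of_total_lt (h : s.1 + s.2.1 + s.2.2 < w.1 + w.2.1 + w.2.2) : ¬ Dom3 s w :=
  fun hd => absurd hd.2.2 h.not_ge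

end Dom3

/-- For each `l ≥ 0`, the complete simple game with class sizes
`(n1, n2, 5 + 2l)` (`n1 ≥ 3 + 2l`, `n2 ≥ 3`) and shift-minimal winning types
`(l+1, 1, l+2)` and `(0, 1, 2(l+2))` is not `3`-trade robust. -/
theorem stmt19 (l n1 n2 : ℕ) (h1 : 3 + 2 * l ≤ n1) (h2 : 3 ≤ n2) :
    let n : ℕ × ℕ × ℕ := (n1, n2, 5 + 2 * l)
    let Win : ℕ × ℕ × ℕ → Prop := fun s =>
      Dom3 s (l + 1, 1, l + 2) ∨ Dom3 s (0, 1, 2 * (l + 2))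
    ∃ A B C D E F : ℕ × ℕ × ℕ,
      (A.1 ≤ n.1 ∧ A.2.1 ≤ n.2.1 ∧ A.2.2 ≤ n.2.2) ∧
      (B.1 ≤ n.1 ∧ B.2.1 ≤ n.2.1 ∧ B.2.2 ≤ n.2.2) ∧
      (C.1 ≤ n.1 ∧ C.2.1 ≤ n.2.1 ∧ C.2.2 ≤ n.2.2) ∧
      (D.1 ≤ n.1 ∧ D.2.1 ≤ n.2.1 ∧ D.2.2 ≤ n.2.2) ∧
      (E.1 ≤ n.1 ∧ E.2.1 ≤ n.2.1 ∧ E.2.2 ≤ n.2.2) ∧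
      (F.1 ≤ n.1 ∧ F.2.1 ≤ n.2.1 ∧ F.2.2 ≤ n.2.2) ∧
      Win A ∧ Win B ∧ Win C ∧ ¬ Win D ∧ ¬ Win E ∧ ¬ Win F ∧
      A.1 + B.1 + C.1 = D.1 + E.1 + F.1 ∧
      A.2.1 + B.2.1 + C.2.1 = D.2.1 + E.2.1 + F.2.1 ∧
      A.2.2 + B.2.2 + C.2.2 = D.2.2 + E.2.2 + F.2.2 := by
  intro n Win
  have hw : Win (l + 1, 1, l + 2) := Or.inl (Dom3.refl _)
  have hD : ¬ Win (0, 0, 2 * l + 5) :=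
    not_or.2 ⟨Dom3.not_of_fst_lt (by simp), Dom3.not_of_fst_add_snd_lt (by simp)⟩
  have hE : ¬ Win (2 * l + 3, 0, 0) :=
    not_or.2 ⟨Dom3.not_of_total_lt (by dsimp only; omega), Dom3.not_of_total_lt (by dsimp only; omega)⟩
  have hF : ¬ Win (l, 3, l + 1) :=
    not_or.2 ⟨Dom3.not_of_fst_lt (by simp), Dom3.not_of_total_lt (by dsimp only; omega)⟩
  refine ⟨_, _, _, _, _, _, ?_, ?_, ?_, ?_, ?_, ?_, hw, hw, hw, hD, hE, hF, ?_, ?_, ?_⟩ <;>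
    simp only [n] <;> omega
end
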